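/- Let V : ℝⁿ → ℝ≥0 satisfy α₁(‖x‖) ≤ V(x) ≤ α₂(‖x‖) with α₁, α₂ ∈ 𝒦∞, and suppose along solutions V(x(t+d)) ≤ ρ(V(x(t))) for a continuous positive definite ρ with ρ(s) < s for s > 0. Then there exists γ ∈ 𝒦 such that V(x(t+d)) − V(x(t)) ≤ −γ(‖x(t)‖) along the same solutions. -/

import Mathlib

/-!
Along the solution `V(x(t+d)) - V(x(t)) ≤ -(id - ρ)(V(x(t)))`, and `id - ρ` is continuous and positive
definite. Since the solution stays in a compact set, `V(x(t))` ranges in some `[α₁ ‖x(t)‖, M]`, so it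
suffices to bound `id - ρ` on `[a, M]` from below by `κ(a)` with `κ ∈ 𝒦`, and take `γ = κ ∘ α₁`.
Such a `κ` is obtained by integrating the monotone envelope `a ↦ inf_{[a, M]} (id - ρ)`.
-/

noncomputable section
open Set Filter

def IsKFun (α : ℝ → ℝ) : Prop :=
  ContinuousOn α (Set.Ici 0) ∧ StrictMonoOn α (Set.Ici 0) ∧ α 0 = 0

def IsKInfFun (α : ℝ → ℝ) : Prop :=
  IsKFun α ∧ Filter.Tendsto α Filter.atTop Filter.atTop

namespace IsKFun

variable {α κ : ℝ → ℝ}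

theorem nonneg (hα : IsKFun α) {a : ℝ} (ha : 0 ≤ a) : 0 ≤ α a :=
  hα.2.2 ▸ hα.2.1.monotoneOn self_mem_Ici ha ha

theorem comp (hκ : IsKFun κ) (hα : IsKFun α) : IsKFun (κ ∘ α) := by
  have hmaps : MapsTo α (Ici 0) (Ici 0) := fun _ ha => hα.nonneg ha
  exact ⟨hκ.1.comp hα.1 hmaps, hκ.2.1.comp hα.2.1 hmaps, by simp [hα.2.2, hκ.2.2]⟩

end IsKFun

section Envelope

open intervalIntegral

/-- The witness is `a ↦ (∫₀ᵃ g) / M`, which is at most `a g(a) / M ≤ g(a)` on `[0, M]`. -/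
theorem exists_isKFun_le_of_monotone {g : ℝ → ℝ} (hg : Monotone g) (hg0 : 0 ≤ g 0)
    (hpos : ∀ a > 0, 0 < g a) {M : ℝ} (hM : 0 < M) :
    ∃ κ : ℝ → ℝ, IsKFun κ ∧ ∀ a ∈ Icc 0 M, κ a ≤ g a := by
  have hint : ∀ a b : ℝ, IntervalIntegrable g MeasureTheory.volume a b :=
    fun _ _ => hg.intervalIntegrable
  refine ⟨fun a => (∫ u in (0:ℝ)..a, g u) / M, ⟨?_, ?_, by simp⟩, ?_⟩
  · exact ((continuous_primitive hint 0).div_const M).continuousOn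
  · intro a ha b _ hab
    have hgap : 0 < ∫ u in a..b, g u :=
      intervalIntegral_pos_of_pos_on (hint a b) (fun u hu => hpos u (ha.out.trans_lt hu.1)) hab
    rw [← integral_interval_sub_left (hint 0 b) (hint 0 a)] at hgap
    exact div_lt_div_of_pos_right (by linarith) hM
  · rintro a ⟨ha0, haM⟩
    have hprim : ∫ u in (0:ℝ)..a, g u ≤ a * g a := by
      simpa using integral_mono_on ha0 (hint 0 a) intervalIntegrable_const fun u hu => hg hu.2
    rw [div_le_iff₀ hM]
    nlinarith [hg ha0]

/-- Clamping `a` to `[0, M]` avoids `sInf ∅ = 0`, so the envelope is monotone on all of `ℝ`. -/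
def lowerEnvelope (h : ℝ → ℝ) (M a : ℝ) : ℝ := sInf (h '' Icc (min (max a 0) M) M)

variable {h : ℝ → ℝ} {M : ℝ}

theorem monotone_lowerEnvelope (hM : 0 ≤ M) (hc : ContinuousOn h (Icc 0 M)) :
    Monotone (lowerEnvelope h M) := by
  intro a b hab
  have hlow : ∀ c : ℝ, 0 ≤ min (max c 0) M := fun c => le_min (le_max_right _ _) hM
  refine csInf_le_csInf ?_ ((nonempty_Icc.2 (min_le_right _ _)).image h) (image_mono ?_)
  · exact isCompact_Icc.bddBelow_image (hc.mono (Icc_subset_Icc_left (hlow a)))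
  · exact Icc_subset_Icc_left (min_le_min_right _ (max_le_max_right _ hab))

theorem lowerEnvelope_le (hc : ContinuousOn h (Icc 0 M)) {a s : ℝ} (ha : 0 ≤ a) (has : a ≤ s)
    (hsM : s ≤ M) : lowerEnvelope h M a ≤ h s := by
  have hclamp : min (max a 0) M = a := by rw [max_eq_left ha, min_eq_left (has.trans hsM)]
  rw [lowerEnvelope, hclamp]
  exact csInf_le (isCompact_Icc.bddBelow_image (hc.mono (Icc_subset_Icc_left ha)))
    ⟨s, ⟨has, hsM⟩, rfl⟩

theorem lowerEnvelope_mem (hM : 0 ≤ M) (hc : ContinuousOn h (Icc 0 M)) (a : ℝ) :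
    lowerEnvelope h M a ∈ h '' Icc (min (max a 0) M) M :=
  (isCompact_Icc.image_of_continuousOn (hc.mono (Icc_subset_Icc_left
    (le_min (le_max_right a 0) hM)))).sInf_mem ((nonempty_Icc.2 (min_le_right _ M)).image h)

theorem exists_isKFun_le_of_continuousOn (hM : 0 < M) (hc : ContinuousOn h (Icc 0 M))
    (h0 : 0 ≤ h 0) (hpos : ∀ s ∈ Ioc 0 M, 0 < h s) :
    ∃ κ : ℝ → ℝ, IsKFun κ ∧ ∀ a s, 0 ≤ a → a ≤ s → s ≤ M → κ a ≤ h s := by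
  have henv_nonneg : 0 ≤ lowerEnvelope h M 0 := by
    obtain ⟨s, hs, hs_eq⟩ := lowerEnvelope_mem hM.le hc 0
    rw [← hs_eq]
    rcases ((le_min (le_max_right 0 0) hM.le).trans hs.1).eq_or_lt with rfl | hs0
    · exact h0
    · exact (hpos s ⟨hs0, hs.2⟩).le
  have henv_pos : ∀ a > 0, 0 < lowerEnvelope h M a := by
    intro a ha
    obtain ⟨s, hs, hs_eq⟩ := lowerEnvelope_mem hM.le hc a
    exact hs_eq ▸ hpos s ⟨(lt_min (lt_max_of_lt_left ha) hM).trans_le hs.1, hs.2⟩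
  obtain ⟨κ, hκ, hκle⟩ :=
    exists_isKFun_le_of_monotone (monotone_lowerEnvelope hM.le hc) henv_nonneg henv_pos hM
  exact ⟨κ, hκ, fun a s ha has hsM =>
    (hκle a ⟨ha, has.trans hsM⟩).trans (lowerEnvelope_le hc ha has hsM)⟩

end Envelope

theorem stmt1_general {n : ℕ}
    (V : EuclideanSpace ℝ (Fin n) → ℝ) (α₁ α₂ ρ : ℝ → ℝ) (d : ℝ)
    (hα₁ : IsKInfFun α₁) (hα₂ : IsKInfFun α₂)
    (hρc : ContinuousOn ρ (Set.Ici 0)) (hρ0 : ρ 0 = 0)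
    (hρlt : ∀ s > (0:ℝ), ρ s < s)
    (hbound : ∀ y, α₁ ‖y‖ ≤ V y ∧ V y ≤ α₂ ‖y‖)
    (S : Set (EuclideanSpace ℝ (Fin n))) (hS : IsCompact S)
    (x : ℝ → EuclideanSpace ℝ (Fin n))
    (hxS : ∀ t ≥ (0:ℝ), x t ∈ S)
    (hdec : ∀ t ≥ (0:ℝ), V (x (t + d)) ≤ ρ (V (x t))) :
    ∃ γ : ℝ → ℝ, IsKFun γ ∧ ∀ t ≥ (0:ℝ), V (x (t + d)) - V (x t) ≤ -γ ‖x t‖ := by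
  obtain ⟨R, hR, hSR⟩ := hS.isBounded.exists_pos_norm_le
  have hM : 0 < α₂ R := hα₂.1.2.2 ▸ hα₂.1.2.1 self_mem_Ici hR.le hR
  obtain ⟨κ, hκ, hκle⟩ := exists_isKFun_le_of_continuousOn (h := fun s => s - ρ s) hM
    ((continuousOn_id.sub hρc).mono Icc_subset_Ici_self) (by simp [hρ0])
    (fun s hs => sub_pos.2 (hρlt s hs.1))
  refine ⟨κ ∘ α₁, hκ.comp hα₁.1, fun t ht => ?_⟩
  have hVM : V (x t) ≤ α₂ R :=
    (hbound (x t)).2.trans (hα₂.1.2.1.monotoneOn (norm_nonneg _) hR.le (hSR _ (hxS t ht)))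
  have hgap := hκle _ _ (hα₁.1.nonneg (norm_nonneg _)) (hbound (x t)).1 hVM
  simp only [Function.comp_apply]
  linarith [hdec t ht]

/-- if `V(x(t+d)) ≤ ρ(V(x(t)))` along solutions (remaining in a compact set)
for a continuous positive definite `ρ < id`, then there exists `γ ∈ 𝒦` with
`V(x(t+d)) − V(x(t)) ≤ −γ(‖x(t)‖)`. -/
theorem stmt1 {n : ℕ} (f : EuclideanSpace ℝ (Fin n) → EuclideanSpace ℝ (Fin n))
    (V : EuclideanSpace ℝ (Fin n) → ℝ) (α₁ α₂ ρ : ℝ → ℝ) (d : ℝ) (hd : 0 < d)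
    (hα₁ : IsKInfFun α₁) (hα₂ : IsKInfFun α₂)
    (hρc : ContinuousOn ρ (Set.Ici 0)) (hρ0 : ρ 0 = 0)
    (hρpos : ∀ s > (0:ℝ), 0 < ρ s) (hρlt : ∀ s > (0:ℝ), ρ s < s)
    (hbound : ∀ y, α₁ ‖y‖ ≤ V y ∧ V y ≤ α₂ ‖y‖)
    (S : Set (EuclideanSpace ℝ (Fin n))) (hS : IsCompact S)
    (x : ℝ → EuclideanSpace ℝ (Fin n)) (hx : ∀ t, HasDerivAt x (f (x t)) t)
    (hxS : ∀ t ≥ (0:ℝ), x t ∈ S)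
    (hdec : ∀ t ≥ (0:ℝ), V (x (t + d)) ≤ ρ (V (x t))) :
    ∃ γ : ℝ → ℝ, IsKFun γ ∧ ∀ t ≥ (0:ℝ), V (x (t + d)) - V (x t) ≤ -γ ‖x t‖ :=
  stmt1_general V α₁ α₂ ρ d hα₁ hα₂ hρc hρ0 hρlt hbound S hS x hxS hdec
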